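/- Let H and H′ be Hermitian matrices contained in cellular algebras W and W′ respectively, and let φ : W → W′ be a weak isomorphism with φ(H) = H′. Then for every t ∈ ℝ, the Green's functions of U(t) = e^{-itH} and U′(t) = e^{-itH′} take on the same multiset of values: writing U(t) = Σ_{R∈R} x_R(t) R and U′(t) = Σ_{R′∈R′} x′_{R′}(t) R′ in the 0-1 bases, we have x_{φ(R)}′(t) = x_R(t) and tr(R Rᵀ) = tr(φ(R) φ(R)ᵀ) for every basis relation R. -/

import Mathlib

open Matrix

/-- The all-ones matrix `J`. -/
def allOnes (V : Type*) : Matrix V V ℂ := Matrix.of fun _ _ => (1 : ℂ)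

/-- A cellular algebra: a subalgebra of `Matrix V V ℂ` (hence containing `I`) that is
closed under Hadamard (entrywise) product and conjugate transpose, and contains the
all-ones matrix `J`. -/
def IsCellular {V : Type*} [Fintype V] [DecidableEq V]
    (W : Subalgebra ℂ (Matrix V V ℂ)) : Prop :=
  (∀ A ∈ W, ∀ B ∈ W, A ⊙ B ∈ W) ∧ (∀ A ∈ W, Aᴴ ∈ W) ∧ allOnes V ∈ W

/-- A 0-1 matrix. -/
def Is01 {V : Type*} (M : Matrix V V ℂ) : Prop := ∀ u v, M u v = 0 ∨ M u v = 1

/-- `R` is a basis of `W` consisting of 0-1 matrices, whose sum is the all-ones matrix. -/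
def IsStdBasis {V : Type*} [Fintype V] [DecidableEq V]
    (W : Subalgebra ℂ (Matrix V V ℂ)) (R : Finset (Matrix V V ℂ)) : Prop :=
  (∀ M ∈ R, Is01 M) ∧ (↑R ⊆ (W : Set (Matrix V V ℂ))) ∧
    LinearIndependent ℂ ((↑) : (↑R : Set (Matrix V V ℂ)) → Matrix V V ℂ) ∧
    Submodule.span ℂ (↑R : Set (Matrix V V ℂ)) = Subalgebra.toSubmodule W ∧
    ∑ M ∈ R, M = allOnes V


/-- A weak isomorphism between cellular algebras: a bijection from `W` onto `W′`
preserving addition, scalar multiplication, matrix multiplication, Hadamard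
multiplication and conjugate transposition. -/
def IsWeakIso {V V2 : Type*} [Fintype V] [DecidableEq V] [Fintype V2] [DecidableEq V2]
    (W : Subalgebra ℂ (Matrix V V ℂ)) (W2 : Subalgebra ℂ (Matrix V2 V2 ℂ))
    (f : Matrix V V ℂ → Matrix V2 V2 ℂ) : Prop :=
  Set.BijOn f (W : Set (Matrix V V ℂ)) (W2 : Set (Matrix V2 V2 ℂ)) ∧
  (∀ A ∈ W, ∀ B ∈ W, f (A + B) = f A + f B) ∧
  (∀ (c : ℂ), ∀ A ∈ W, f (c • A) = c • f A) ∧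
  (∀ A ∈ W, ∀ B ∈ W, f (A * B) = f A * f B) ∧
  (∀ A ∈ W, ∀ B ∈ W, f (A ⊙ B) = f A ⊙ f B) ∧
  (∀ A ∈ W, f Aᴴ = (f A)ᴴ)

/-! On the finite-dimensional algebra `W` the weak isomorphism `φ` is a continuous algebra
homomorphism, so it commutes with the exponential series: `φ (e^{-itH}) = e^{-itH′}`, and applying
`φ` to the expansion of `e^{-itH}` over `R` expands `e^{-itH′}` over `φ(R)` with the same
coefficients. For a 0-1 matrix `N`, `tr (N Nᵀ)` counts the ones of `N`, which is the scalar `s` in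
`J N J = s J`. As `J` is the Hadamard unit, `φ J = J′`, so `φ` preserves this count; and `φ N` is
again a 0-1 matrix, the 0-1 matrices being the Hadamard idempotents. -/

open NormedSpace

lemma is01_iff_hadamard_self {V : Type*} {M : Matrix V V ℂ} : Is01 M ↔ M ⊙ M = M := by
  simp only [Is01, hadamard_self_eq_self_iff, IsIdempotentElem.iff_eq_zero_or_one]

lemma allOnes_hadamard {V : Type*} (M : Matrix V V ℂ) : allOnes V ⊙ M = M := by
  ext u v
  simp [allOnes]

lemma hadamard_allOnes {V : Type*} (M : Matrix V V ℂ) : M ⊙ allOnes V = M := by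
  ext u v
  simp [allOnes]

lemma allOnes_mul_mul_allOnes {V : Type*} [Fintype V] (M : Matrix V V ℂ) :
    allOnes V * M * allOnes V = (∑ u, ∑ v, M u v) • allOnes V := by
  ext u v
  simp only [allOnes, mul_apply, of_apply, one_mul, mul_one, Matrix.smul_apply, smul_eq_mul]
  rw [Finset.sum_comm]

lemma Is01.trace_mul_transpose {V : Type*} [Fintype V] {M : Matrix V V ℂ} (hM : Is01 M) :
    (M * Mᵀ).trace = ∑ u, ∑ v, M u v := by
  refine Finset.sum_congr rfl fun u _ => Finset.sum_congr rfl fun v _ => ?_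
  rcases hM u v with h | h <;> simp [h]

lemma Subalgebra.exp_mem_of_finiteDimensional {𝔸 : Type*} [Ring 𝔸] [Algebra ℂ 𝔸] [Algebra ℚ 𝔸]
    [IsScalarTower ℚ ℂ 𝔸] [TopologicalSpace 𝔸] [IsTopologicalRing 𝔸] [T2Space 𝔸]
    [ContinuousSMul ℂ 𝔸] (W : Subalgebra ℂ 𝔸) [FiniteDimensional ℂ W] {a : 𝔸} (ha : a ∈ W) :
    exp a ∈ W :=
  exp_mem (s := W) W.toSubmodule.closed_of_finiteDimensional ha

theorem AlgHom.map_exp_of_finiteDimensional {𝔸 𝔹 : Type*} [NormedRing 𝔸] [NormedAlgebra ℂ 𝔸]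
    [FiniteDimensional ℂ 𝔸] [Ring 𝔹] [Algebra ℂ 𝔹] [TopologicalSpace 𝔹]
    [IsTopologicalRing 𝔹] [T2Space 𝔹] [ContinuousSMul ℂ 𝔹] (φ : 𝔸 →ₐ[ℂ] 𝔹) (a : 𝔸) :
    φ (exp a) = exp (φ a) := by
  have : CompleteSpace 𝔸 := FiniteDimensional.complete ℂ 𝔸
  have hsum := (exp_series_hasSum_exp' (𝕂 := ℂ) a).map φ
    φ.toLinearMap.continuous_of_finiteDimensional
  simp only [Function.comp_def, map_smul, map_pow] at hsum
  rw [congrFun (exp_eq_tsum ℂ) (φ a), hsum.tsum_eq]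

namespace IsWeakIso

variable {V V2 : Type*} [Fintype V] [DecidableEq V] [Fintype V2] [DecidableEq V2]
  {W : Subalgebra ℂ (Matrix V V ℂ)} {W2 : Subalgebra ℂ (Matrix V2 V2 ℂ)}
  {f : Matrix V V ℂ → Matrix V2 V2 ℂ}

lemma map_add (hf : IsWeakIso W W2 f) {A B : Matrix V V ℂ} (hA : A ∈ W) (hB : B ∈ W) :
    f (A + B) = f A + f B :=
  hf.2.1 A hA B hB

lemma map_smul (hf : IsWeakIso W W2 f) (c : ℂ) {A : Matrix V V ℂ} (hA : A ∈ W) :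
    f (c • A) = c • f A :=
  hf.2.2.1 c A hA

lemma map_mul (hf : IsWeakIso W W2 f) {A B : Matrix V V ℂ} (hA : A ∈ W) (hB : B ∈ W) :
    f (A * B) = f A * f B :=
  hf.2.2.2.1 A hA B hB

lemma map_hadamard (hf : IsWeakIso W W2 f) {A B : Matrix V V ℂ} (hA : A ∈ W) (hB : B ∈ W) :
    f (A ⊙ B) = f A ⊙ f B :=
  hf.2.2.2.2.1 A hA B hB

lemma map_zero (hf : IsWeakIso W W2 f) : f 0 = 0 := by
  simpa using hf.map_add W.zero_mem W.zero_mem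

lemma map_one (hf : IsWeakIso W W2 f) : f 1 = 1 := by
  obtain ⟨B, hB, hfB⟩ := hf.1.surjOn W2.one_mem
  simpa [hfB] using (hf.map_mul W.one_mem hB).symm

def toAlgHom (hf : IsWeakIso W W2 f) : W →ₐ[ℂ] Matrix V2 V2 ℂ where
  toFun A := f A
  map_one' := hf.map_one
  map_mul' A B := hf.map_mul A.2 B.2
  map_zero' := hf.map_zero
  map_add' A B := hf.map_add A.2 B.2
  commutes' c := by
    simp only [Algebra.algebraMap_eq_smul_one, Subalgebra.coe_smul, Subalgebra.coe_one]
    rw [hf.map_smul c W.one_mem, hf.map_one]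

lemma map_sum_smul (hf : IsWeakIso W W2 f) {R : Finset (Matrix V V ℂ)}
    (hR : ↑R ⊆ (W : Set (Matrix V V ℂ))) (x : Matrix V V ℂ → ℂ) :
    f (∑ N ∈ R, x N • N) = ∑ N ∈ R, x N • f N := by
  have h := map_sum hf.toAlgHom (fun N : R => x N • (⟨N, hR N.2⟩ : W)) R.attach
  simp only [_root_.map_smul] at h
  rw [← Finset.sum_attach R, ← Finset.sum_attach R (fun N => x N • f N)]
  exact congrArg f (AddSubmonoidClass.coe_finsetSum ..).symm |>.trans h

-- Any norm on the matrices would do: it only serves to make `W` a finite-dimensional normed algebra.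
open scoped Matrix.Norms.Operator in
lemma map_exp (hf : IsWeakIso W W2 f) {A : Matrix V V ℂ} (hA : A ∈ W) :
    f (exp A) = exp (f A) := by
  have hval := W.val.map_exp_of_finiteDimensional ⟨A, hA⟩
  have hφ := hf.toAlgHom.map_exp_of_finiteDimensional ⟨A, hA⟩
  exact (congrArg f hval.symm).trans hφ

lemma is01_map (hf : IsWeakIso W W2 f) {N : Matrix V V ℂ} (hN : N ∈ W) (h01 : Is01 N) :
    Is01 (f N) := by
  rw [is01_iff_hadamard_self] at h01 ⊢
  rw [← hf.map_hadamard hN hN, h01]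

lemma map_allOnes (hf : IsWeakIso W W2 f) (hJ : allOnes V ∈ W) (hJ2 : allOnes V2 ∈ W2) :
    f (allOnes V) = allOnes V2 := by
  obtain ⟨B, hB, hfB⟩ := hf.1.surjOn hJ2
  simpa [allOnes_hadamard, hadamard_allOnes, hfB] using (hf.map_hadamard hJ hB).symm

lemma isEmpty_of_isEmpty (hf : IsWeakIso W W2 f) [IsEmpty V2] : IsEmpty V := by
  have h10 : (1 : Matrix V V ℂ) = 0 := hf.1.injOn W.one_mem W.zero_mem (Subsingleton.elim _ _)
  exact ⟨fun v => by simpa using congrFun (congrFun h10 v) v⟩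

lemma sum_entries_map (hf : IsWeakIso W W2 f) (hJ : allOnes V ∈ W) (hJ2 : allOnes V2 ∈ W2)
    {N : Matrix V V ℂ} (hN : N ∈ W) :
    ∑ u, ∑ v, f N u v = ∑ u, ∑ v, N u v := by
  have hfJ := hf.map_allOnes hJ hJ2
  have hscaled : (∑ u, ∑ v, f N u v) • allOnes V2 = (∑ u, ∑ v, N u v) • allOnes V2 :=
    calc (∑ u, ∑ v, f N u v) • allOnes V2
        = f (allOnes V) * f N * f (allOnes V) := by rw [hfJ, allOnes_mul_mul_allOnes]
      _ = f (allOnes V * N * allOnes V) := by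
        rw [hf.map_mul (W.mul_mem hJ hN) hJ, hf.map_mul hJ hN]
      _ = (∑ u, ∑ v, N u v) • allOnes V2 := by
        rw [allOnes_mul_mul_allOnes, hf.map_smul _ hJ, hfJ]
  cases isEmpty_or_nonempty V2 with
  | inl _ =>
    have := hf.isEmpty_of_isEmpty
    simp
  | inr h =>
    obtain ⟨u⟩ := h
    simpa [allOnes] using congrFun (congrFun hscaled u) u

end IsWeakIso

theorem stmt_17_general {V V2 : Type*} [Fintype V] [DecidableEq V] [Fintype V2] [DecidableEq V2]
    (W : Subalgebra ℂ (Matrix V V ℂ)) (W2 : Subalgebra ℂ (Matrix V2 V2 ℂ))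
    (hW : IsCellular W) (hW2 : IsCellular W2)
    (R : Finset (Matrix V V ℂ)) (hR : IsStdBasis W R)
    (f : Matrix V V ℂ → Matrix V2 V2 ℂ) (hf : IsWeakIso W W2 f)
    (H : Matrix V V ℂ) (H2 : Matrix V2 V2 ℂ)
    (hHW : H ∈ W)
    (hfH : f H = H2) (t : ℝ) :
    ∃ x : Matrix V V ℂ → ℂ,
      NormedSpace.exp ((-Complex.I * t) • H) = ∑ N ∈ R, x N • N ∧
      NormedSpace.exp ((-Complex.I * t) • H2) = ∑ N ∈ R, x N • f N ∧
      ∀ N ∈ R, (f N * (f N)ᵀ).trace = (N * Nᵀ).trace := by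
  obtain ⟨h01, hRW, -, hspan, -⟩ := hR
  have hcH : (-Complex.I * t) • H ∈ W := W.smul_mem hHW _
  have hexp : exp ((-Complex.I * t) • H) ∈ Submodule.span ℂ (R : Set (Matrix V V ℂ)) :=
    hspan ▸ W.exp_mem_of_finiteDimensional hcH
  obtain ⟨x, -, hx⟩ := Submodule.mem_span_finset.mp hexp
  refine ⟨x, hx.symm, ?_, fun N hN => ?_⟩
  · rw [← hfH, ← hf.map_smul _ hHW, ← hf.map_exp hcH, ← hx, hf.map_sum_smul hRW]
  · rw [(hf.is01_map (hRW hN) (h01 N hN)).trace_mul_transpose, (h01 N hN).trace_mul_transpose,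
      hf.sum_entries_map hW.2.2 hW2.2.2 (hRW hN)]

/-- If `φ(H) = H′` under a weak isomorphism of cellular algebras, then for every `t`
the unitaries `e^{-itH}` and `e^{-itH′}` have the same coefficients over corresponding
basis relations, and corresponding basis relations have the same number of ones;
hence the Green'\''s functions take on the same values with the same multiplicities. -/
theorem stmt_17 {V V2 : Type*} [Fintype V] [DecidableEq V] [Fintype V2] [DecidableEq V2]
    (W : Subalgebra ℂ (Matrix V V ℂ)) (W2 : Subalgebra ℂ (Matrix V2 V2 ℂ))
    (hW : IsCellular W) (hW2 : IsCellular W2)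
    (R : Finset (Matrix V V ℂ)) (hR : IsStdBasis W R)
    (R2 : Finset (Matrix V2 V2 ℂ)) (hR2 : IsStdBasis W2 R2)
    (f : Matrix V V ℂ → Matrix V2 V2 ℂ) (hf : IsWeakIso W W2 f)
    (H : Matrix V V ℂ) (H2 : Matrix V2 V2 ℂ)
    (hHW : H ∈ W) (hH2W : H2 ∈ W2) (hH : H.IsHermitian) (hH2 : H2.IsHermitian)
    (hfH : f H = H2) (t : ℝ) :
    ∃ x : Matrix V V ℂ → ℂ,
      NormedSpace.exp ((-Complex.I * t) • H) = ∑ N ∈ R, x N • N ∧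
      NormedSpace.exp ((-Complex.I * t) • H2) = ∑ N ∈ R, x N • f N ∧
      ∀ N ∈ R, (f N * (f N)ᵀ).trace = (N * Nᵀ).trace :=
  stmt_17_general W W2 hW hW2 R hR f hf H H2 hHW hfH t
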